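/- For every L(1,2)-edge labeling f of G_v and every edge e in S_3, at most three edges of G_v have label f(e)+1, and at most three edges of G_v have label f(e)−1. -/

import Mathlib

/-- The infinite triangular grid `T6`. -/
def T6 : SimpleGraph (ℤ × ℤ) where
  Adj u v := (v.1 - u.1, v.2 - u.2) ∈
    ({(1,0), (-1,0), (0,1), (0,-1), (1,1), (-1,-1)} : Set (ℤ × ℤ))
  symm := ⟨by
    rintro ⟨a, b⟩ ⟨c, d⟩ h
    simp only [Set.mem_insert_iff, Set.mem_singleton_iff, Prod.mk.injEq] at h ⊢
    omega⟩
  loopless := ⟨by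
    rintro ⟨a, b⟩ h
    simp only [Set.mem_insert_iff, Set.mem_singleton_iff, Prod.mk.injEq, sub_self] at h
    omega⟩

/-- `f` is an L(1,2)-edge labeling of `G`. -/
def IsL12 {V : Type*} (G : SimpleGraph V) (f : Sym2 V → ℕ) : Prop :=
  (∀ e1 ∈ G.edgeSet, ∀ e2 ∈ G.edgeSet, e1 ≠ e2 → (∃ v, v ∈ e1 ∧ v ∈ e2) →
    f e1 ≠ f e2) ∧
  (∀ e1 ∈ G.edgeSet, ∀ e2 ∈ G.edgeSet, e1 ≠ e2 → ¬ (∃ v, v ∈ e1 ∧ v ∈ e2) →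
    (∃ e3 ∈ G.edgeSet, (∃ v, v ∈ e1 ∧ v ∈ e3) ∧ (∃ v, v ∈ e2 ∧ v ∈ e3)) →
    2 ≤ |(f e1 : ℤ) - (f e2 : ℤ)|)

/-- The subgraph `G_v` of `T6`: all edges with an endpoint adjacent to `v`. -/
def Gv (v : ℤ × ℤ) : SimpleGraph (ℤ × ℤ) where
  Adj u w := T6.Adj u w ∧ (T6.Adj v u ∨ T6.Adj v w)
  symm := ⟨fun u w h => ⟨T6.symm.symm _ _ h.1, h.2.symm⟩⟩
  loopless := ⟨fun u h => T6.loopless.irrefl u h.1⟩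

/-- `S_1`: the edges of `G_v` incident to `v`. -/
def S1 (v : ℤ × ℤ) : Set (Sym2 (ℤ × ℤ)) := {e | e ∈ (Gv v).edgeSet ∧ v ∈ e}

/-- `S_2`: the edges of `G_v` both of whose endpoints are adjacent to `v`. -/
def S2 (v : ℤ × ℤ) : Set (Sym2 (ℤ × ℤ)) := {e | e ∈ (Gv v).edgeSet ∧ ∀ u ∈ e, T6.Adj v u}

/-- `S_3`: the remaining edges of `G_v`. -/
def S3 (v : ℤ × ℤ) : Set (Sym2 (ℤ × ℤ)) := (Gv v).edgeSet \ (S1 v ∪ S2 v)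

/-!
Two edges that both meet a common edge `m` are at distance at most 2 (through `m`), so an
L(1,2)-edge labeling gives them different labels. Hence on a graph with an edge dominating set of
`k` edges each label occurs at most `k` times. Every edge of `G_v` has an endpoint adjacent to `v`,
and the hexagon of neighbours of `v` has a perfect matching, an edge dominating set of `G_v` with
three edges.
-/

namespace SimpleGraph

variable {V : Type*}

def IsEdgeDominating (G : SimpleGraph V) (D : Finset (Sym2 V)) : Prop :=
  ↑D ⊆ G.edgeSet ∧ ∀ e ∈ G.edgeSet, ∃ m ∈ D, ∃ x, x ∈ e ∧ x ∈ m

end SimpleGraph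

namespace IsL12

variable {V : Type*} {G : SimpleGraph V} {f : Sym2 V → ℕ}

theorem eq_of_meet_common_edge (hf : IsL12 G f) {e₁ e₂ m : Sym2 V}
    (h₁ : e₁ ∈ G.edgeSet) (h₂ : e₂ ∈ G.edgeSet) (hm : m ∈ G.edgeSet)
    (hm₁ : ∃ x, x ∈ e₁ ∧ x ∈ m) (hm₂ : ∃ x, x ∈ e₂ ∧ x ∈ m) (hlab : f e₁ = f e₂) :
    e₁ = e₂ := by
  by_contra hne
  by_cases hmeet : ∃ x, x ∈ e₁ ∧ x ∈ e₂
  · exact hf.1 e₁ h₁ e₂ h₂ hne hmeet hlab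
  · have hfar := hf.2 e₁ h₁ e₂ h₂ hne hmeet ⟨m, hm, hm₁, hm₂⟩
    simp [hlab] at hfar

theorem card_le_of_isEdgeDominating (hf : IsL12 G f) {D : Finset (Sym2 V)}
    (hD : G.IsEdgeDominating D) {s : Finset (Sym2 V)} {n : ℕ}
    (hs : ∀ e ∈ s, e ∈ G.edgeSet ∧ f e = n) : s.card ≤ D.card := by
  choose! dom hdom hmeet using fun e (he : e ∈ G.edgeSet) => hD.2 e he
  refine Finset.card_le_card_of_injOn dom (fun e he => hdom e (hs e he).1) ?_
  intro e₁ he₁ e₂ he₂ hdom_eq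
  obtain ⟨h₁, hl₁⟩ := hs e₁ he₁
  obtain ⟨h₂, hl₂⟩ := hs e₂ he₂
  refine hf.eq_of_meet_common_edge h₁ h₂ (hD.1 (hdom e₁ h₁)) (hmeet e₁ h₁) ?_ (hl₁.trans hl₂.symm)
  rw [hdom_eq]
  exact hmeet e₂ h₂

theorem eq_or_eq_of_four_of_isEdgeDominating (hf : IsL12 G f) {D : Finset (Sym2 V)}
    (hD : G.IsEdgeDominating D) (hD3 : D.card ≤ 3) {e₁ e₂ e₃ e₄ : Sym2 V}
    (h₁ : e₁ ∈ G.edgeSet) (h₂ : e₂ ∈ G.edgeSet) (h₃ : e₃ ∈ G.edgeSet) (h₄ : e₄ ∈ G.edgeSet)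
    (hl₂ : f e₂ = f e₁) (hl₃ : f e₃ = f e₁) (hl₄ : f e₄ = f e₁) :
    e₁ = e₂ ∨ e₁ = e₃ ∨ e₁ = e₄ ∨ e₂ = e₃ ∨ e₂ = e₄ ∨ e₃ = e₄ := by
  classical
  by_contra! hne
  obtain ⟨n₁₂, n₁₃, n₁₄, n₂₃, n₂₄, n₃₄⟩ := hne
  have hcard : ({e₁, e₂, e₃, e₄} : Finset (Sym2 V)).card = 4 := by
    simp [Finset.card_insert_of_notMem, n₁₂, n₁₃, n₁₄, n₂₃, n₂₄, n₃₄]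
  have hle := hf.card_le_of_isEdgeDominating hD (s := {e₁, e₂, e₃, e₄}) (n := f e₁) (by
    simp only [Finset.mem_insert, Finset.mem_singleton]
    rintro e (rfl | rfl | rfl | rfl)
    exacts [⟨h₁, rfl⟩, ⟨h₂, hl₂⟩, ⟨h₃, hl₃⟩, ⟨h₄, hl₄⟩])
  omega

end IsL12

def hexagonMatching (v : ℤ × ℤ) : Finset (Sym2 (ℤ × ℤ)) :=
  {s(v + (0, 1), v + (1, 1)), s(v + (-1, 0), v + (-1, -1)), s(v + (1, 0), v + (0, -1))}

theorem T6_adj_iff {u w : ℤ × ℤ} : T6.Adj u w ↔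
    (w.1 - u.1 = 1 ∧ w.2 - u.2 = 0) ∨ (w.1 - u.1 = -1 ∧ w.2 - u.2 = 0) ∨
    (w.1 - u.1 = 0 ∧ w.2 - u.2 = 1) ∨ (w.1 - u.1 = 0 ∧ w.2 - u.2 = -1) ∨
    (w.1 - u.1 = 1 ∧ w.2 - u.2 = 1) ∨ (w.1 - u.1 = -1 ∧ w.2 - u.2 = -1) := by
  simp only [T6, Set.mem_insert_iff, Set.mem_singleton_iff, Prod.ext_iff]

theorem exists_mem_hexagonMatching_of_adj {v u : ℤ × ℤ} (h : T6.Adj v u) :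
    ∃ m ∈ hexagonMatching v, u ∈ m := by
  simp only [hexagonMatching, Finset.mem_insert, Finset.mem_singleton, exists_eq_or_imp,
    exists_eq_left, Sym2.mem_iff, Prod.ext_iff, Prod.fst_add, Prod.snd_add]
  rw [T6_adj_iff] at h
  omega

theorem isEdgeDominating_hexagonMatching (v : ℤ × ℤ) :
    (Gv v).IsEdgeDominating (hexagonMatching v) := by
  refine ⟨?_, ?_⟩
  · intro m hm
    simp only [hexagonMatching, Finset.coe_insert, Finset.coe_singleton, Set.mem_insert_iff,
      Set.mem_singleton_iff] at hm
    rcases hm with rfl | rfl | rfl <;>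
      simp only [SimpleGraph.mem_edgeSet, Gv, T6_adj_iff, Prod.fst_add, Prod.snd_add] <;> omega
  · intro e he
    induction e using Sym2.inductionOn with
    | hf u w =>
      rcases he.2 with hu | hw
      · obtain ⟨m, hm, hum⟩ := exists_mem_hexagonMatching_of_adj hu
        exact ⟨m, hm, u, Sym2.mem_mk_left u w, hum⟩
      · obtain ⟨m, hm, hwm⟩ := exists_mem_hexagonMatching_of_adj hw
        exact ⟨m, hm, w, Sym2.mem_mk_right u w, hwm⟩

/-- For an edge `e ∈ S_3`, at most three edges of `G_v` have label `f e + 1`, and at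
most three edges of `G_v` have label `f e - 1`. -/
theorem S3_adjacent_labels_at_most_thrice (v : ℤ × ℤ) (f : Sym2 (ℤ × ℤ) → ℕ)
    (hf : IsL12 (Gv v) f) : ∀ e ∈ S3 v,
    (∀ e1 ∈ (Gv v).edgeSet, ∀ e2 ∈ (Gv v).edgeSet, ∀ e3 ∈ (Gv v).edgeSet,
      ∀ e4 ∈ (Gv v).edgeSet,
      f e1 = f e + 1 → f e2 = f e + 1 → f e3 = f e + 1 → f e4 = f e + 1 →
      e1 = e2 ∨ e1 = e3 ∨ e1 = e4 ∨ e2 = e3 ∨ e2 = e4 ∨ e3 = e4) ∧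
    (∀ e1 ∈ (Gv v).edgeSet, ∀ e2 ∈ (Gv v).edgeSet, ∀ e3 ∈ (Gv v).edgeSet,
      ∀ e4 ∈ (Gv v).edgeSet,
      (f e1 : ℤ) = (f e : ℤ) - 1 → (f e2 : ℤ) = (f e : ℤ) - 1 →
      (f e3 : ℤ) = (f e : ℤ) - 1 → (f e4 : ℤ) = (f e : ℤ) - 1 →
      e1 = e2 ∨ e1 = e3 ∨ e1 = e4 ∨ e2 = e3 ∨ e2 = e4 ∨ e3 = e4) := by
  intro e _
  have hD := isEdgeDominating_hexagonMatching v
  have hD3 : (hexagonMatching v).card ≤ 3 := Finset.card_le_three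
  constructor <;> intro e₁ h₁ e₂ h₂ e₃ h₃ e₄ h₄ l₁ l₂ l₃ l₄ <;>
    exact hf.eq_or_eq_of_four_of_isEdgeDominating hD hD3 h₁ h₂ h₃ h₄
      (by omega) (by omega) (by omega)
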